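/- arXiv:2105.05296 — 3 statements merged into one kernel-verified Lean document; each statement's English description precedes it below -/
import Mathlib

section
/- Let I be a finite index set, let w : I → ℝ be prior-step particle weights with w j > 0 for all j ∈ I and ∑_{j ∈ I} w j = 1, let w' : I → ℝ be posterior-step particle weights with w' i ≥ 0 for all i ∈ I, let p : I → ℝ satisfy p i > 0 for all i ∈ I, let q : I × I → ℝ satisfy 0 < q i j ≤ m for all i, j ∈ I (where m is an upper bound on the transition model), and let A ⊆ I be a subset. Then −∑_{i ∈ I} w' i · log(p i · ∑_{j ∈ I} q i j · w j) ≥ −∑_{i ∈ A} w' i · log(p i · ∑_{j ∈ I} q i j · w j) − ∑_{i ∈ I \ A} w' i · log(m · p i). (Lower bound of Theorem 3 on term (b) of the Boers et al. particle-based differential-entropy estimator.) -/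
open Finset

lemma Finset.sum_mul_le_of_sum_eq_one {ι : Type*} {s : Finset ι} {w q : ι → ℝ} {m : ℝ}
    (hw : ∀ j ∈ s, 0 ≤ w j) (hwsum : ∑ j ∈ s, w j = 1) (hqm : ∀ j ∈ s, q j ≤ m) :
    ∑ j ∈ s, q j * w j ≤ m :=
  calc ∑ j ∈ s, q j * w j ≤ ∑ j ∈ s, m * w j :=
        sum_le_sum fun j hj => mul_le_mul_of_nonneg_right (hqm j hj) (hw j hj)
    _ = m := by rw [← mul_sum, hwsum, mul_one]

lemma Finset.sum_mul_pos_of_sum_eq_one {ι : Type*} {s : Finset ι} {w q : ι → ℝ}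
    (hw : ∀ j ∈ s, 0 < w j) (hwsum : ∑ j ∈ s, w j = 1) (hq : ∀ j ∈ s, 0 < q j) :
    0 < ∑ j ∈ s, q j * w j :=
  sum_pos (fun j hj => mul_pos (hq j hj) (hw j hj))
    (nonempty_of_sum_ne_zero (hwsum ▸ one_ne_zero))

lemma log_mul_sum_mul_le_log_mul {ι : Type*} {s : Finset ι} {w q : ι → ℝ} {p m : ℝ}
    (hw : ∀ j ∈ s, 0 < w j) (hwsum : ∑ j ∈ s, w j = 1) (hp : 0 < p)
    (hq : ∀ j ∈ s, 0 < q j) (hqm : ∀ j ∈ s, q j ≤ m) :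
    Real.log (p * ∑ j ∈ s, q j * w j) ≤ Real.log (m * p) := by
  rw [mul_comm m]
  apply Real.log_le_log (mul_pos hp (sum_mul_pos_of_sum_eq_one hw hwsum hq))
  exact mul_le_mul_of_nonneg_left
    (sum_mul_le_of_sum_eq_one (fun j hj => (hw j hj).le) hwsum hqm) hp.le

/-- Lower bound of Theorem 3 on term (b) of the Boers et al. particle-based
differential-entropy estimator. -/
theorem stmt_2 {I : Type*} [Fintype I] [DecidableEq I]
    (w w' p : I → ℝ) (q : I → I → ℝ) (m : ℝ)
    (hw : ∀ j, 0 < w j) (hwsum : ∑ j, w j = 1)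
    (hw' : ∀ i, 0 ≤ w' i)
    (hp : ∀ i, 0 < p i)
    (hq : ∀ i j, 0 < q i j) (hqm : ∀ i j, q i j ≤ m)
    (A : Finset I) :
    -∑ i, w' i * Real.log (p i * ∑ j, q i j * w j) ≥
      (-∑ i ∈ A, w' i * Real.log (p i * ∑ j, q i j * w j))
        - ∑ i ∈ Finset.univ \ A, w' i * Real.log (m * p i) := by
  have outside_A : ∑ i ∈ univ \ A, w' i * Real.log (p i * ∑ j, q i j * w j)
      ≤ ∑ i ∈ univ \ A, w' i * Real.log (m * p i) :=
    sum_le_sum fun i _ => mul_le_mul_of_nonneg_left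
      (log_mul_sum_mul_le_log_mul (fun j _ => hw j) hwsum (hp i)
        (fun j _ => hq i j) (fun j _ => hqm i j)) (hw' i)
  rw [← sum_sdiff (subset_univ A)]
  linarith
end

section
/- Let I be a finite index set, let w : I → ℝ be prior-step particle weights with w j > 0 for all j ∈ I and ∑_{j ∈ I} w j = 1, let w' : I → ℝ be posterior-step particle weights with w' i ≥ 0 for all i ∈ I, let p : I → ℝ satisfy 0 < p i ≤ n for all i ∈ I, let q : I × I → ℝ satisfy 0 < q i j ≤ m for all i, j ∈ I, and let A, A' ⊆ I be nonempty subsets. Define Ĥ ≜ log(∑_{i ∈ I} p i · w i) − ∑_{i ∈ I} w' i · log(p i · ∑_{j ∈ I} q i j · w j) (the Boers et al. entropy estimator). Then Ĥ ≥ log(∑_{i ∈ A} p i · w i) − ∑_{i ∈ A'} w' i · log(p i · ∑_{j ∈ I} q i j · w j) − ∑_{i ∈ I \ A'} w' i · log(m · p i). (Combined simplification lower bound lb(b^s_k, b^s_{k+1}, b_k, b_{k+1}) ≤ Ĥ(b_{k+1}), obtained by combining the lower bounds of Theorems 2 and 3.) -/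
/-!
Dropping particles from term (a) only shrinks the argument of `log`. In term (b), every
dropped particle's predictive sum `∑ j, q i j * w j` is a convex combination of values
`≤ m`, so its `log` term is at most `w' i * log (m * p i)`.
-/

open Finset Real

theorem Real.log_sum_le_log_sum_of_subset {ι : Type*} {s t : Finset ι} {f : ι → ℝ}
    (hst : s ⊆ t) (hf : ∀ i ∈ t, 0 ≤ f i) (hs : 0 < ∑ i ∈ s, f i) :
    log (∑ i ∈ s, f i) ≤ log (∑ i ∈ t, f i) :=
  log_le_log hs (sum_le_sum_of_subset_of_nonneg hst fun i hi _ => hf i hi)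

theorem Finset.sum_mul_le_of_forall_le_of_sum_eq_one {ι : Type*} {s : Finset ι}
    {q w : ι → ℝ} {m : ℝ} (hw : ∀ j ∈ s, 0 ≤ w j) (hwsum : ∑ j ∈ s, w j = 1)
    (hq : ∀ j ∈ s, q j ≤ m) : ∑ j ∈ s, q j * w j ≤ m :=
  calc ∑ j ∈ s, q j * w j ≤ ∑ j ∈ s, m * w j :=
        sum_le_sum fun j hj => mul_le_mul_of_nonneg_right (hq j hj) (hw j hj)
    _ = m := by rw [← mul_sum, hwsum, mul_one]

theorem Finset.sum_mul_log_le_of_subset {ι : Type*} [DecidableEq ι] {s t : Finset ι}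
    {c f g : ι → ℝ} (hst : s ⊆ t) (hc : ∀ i ∈ t \ s, 0 ≤ c i)
    (hf : ∀ i ∈ t \ s, 0 < f i) (hfg : ∀ i ∈ t \ s, f i ≤ g i) :
    ∑ i ∈ t, c i * log (f i) ≤
      ∑ i ∈ s, c i * log (f i) + ∑ i ∈ t \ s, c i * log (g i) := by
  rw [← sum_sdiff hst, add_comm]
  gcongr with i hi
  · exact hc i hi
  · exact hf i hi
  · exact hfg i hi

theorem stmt_4_general {I : Type*} [Fintype I] [DecidableEq I]
    (w w' p : I → ℝ) (q : I → I → ℝ) (m : ℝ)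
    (hw : ∀ j, 0 < w j) (hwsum : ∑ j, w j = 1)
    (hw' : ∀ i, 0 ≤ w' i)
    (hp : ∀ i, 0 < p i)
    (hq : ∀ i j, 0 < q i j) (hqm : ∀ i j, q i j ≤ m)
    (A A' : Finset I) (hA : A.Nonempty) :
    Real.log (∑ i, p i * w i)
        - ∑ i, w' i * Real.log (p i * ∑ j, q i j * w j) ≥
      Real.log (∑ i ∈ A, p i * w i)
        - ∑ i ∈ A', w' i * Real.log (p i * ∑ j, q i j * w j)
        - ∑ i ∈ Finset.univ \ A', w' i * Real.log (m * p i) := by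
  have hpw : ∀ i, 0 < p i * w i := fun i => mul_pos (hp i) (hw i)
  have hprior : ∀ i, 0 < ∑ j, q i j * w j := fun i =>
    sum_pos (fun j _ => mul_pos (hq i j) (hw j)) (hA.mono (subset_univ A))
  have hterm_a : log (∑ i ∈ A, p i * w i) ≤ log (∑ i, p i * w i) :=
    log_sum_le_log_sum_of_subset (subset_univ A) (fun i _ => (hpw i).le)
      (sum_pos (fun i _ => hpw i) hA)
  have hterm_b := sum_mul_log_le_of_subset (c := w') (g := fun i => m * p i)
    (subset_univ A') (fun i _ => hw' i) (fun i _ => mul_pos (hp i) (hprior i))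
    fun i _ => by
      rw [mul_comm m]
      exact mul_le_mul_of_nonneg_left
        (sum_mul_le_of_forall_le_of_sum_eq_one (fun j _ => (hw j).le) hwsum
          fun j _ => hqm i j) (hp i).le
  linarith

/-- Combined simplification lower bound on the Boers et al. entropy estimator,
obtained by combining the lower bounds of Theorems 2 and 3. -/
theorem stmt_4 {I : Type*} [Fintype I] [DecidableEq I]
    (w w' p : I → ℝ) (q : I → I → ℝ) (n m : ℝ)
    (hw : ∀ j, 0 < w j) (hwsum : ∑ j, w j = 1)
    (hw' : ∀ i, 0 ≤ w' i)
    (hp : ∀ i, 0 < p i) (hpn : ∀ i, p i ≤ n)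
    (hq : ∀ i j, 0 < q i j) (hqm : ∀ i j, q i j ≤ m)
    (A A' : Finset I) (hA : A.Nonempty) (hA' : A'.Nonempty) :
    Real.log (∑ i, p i * w i)
        - ∑ i, w' i * Real.log (p i * ∑ j, q i j * w j) ≥
      Real.log (∑ i ∈ A, p i * w i)
        - ∑ i ∈ A', w' i * Real.log (p i * ∑ j, q i j * w j)
        - ∑ i ∈ Finset.univ \ A', w' i * Real.log (m * p i) :=
  stmt_4_general w w' p q m hw hwsum hw' hp hq hqm A A' hA
end

section
/- Let I be a finite index set, let w : I → ℝ satisfy w i > 0 for all i ∈ I and ∑_{i ∈ I} w i = 1, let p : I → ℝ satisfy 0 < p i ≤ n for all i ∈ I, and let A ⊆ A' ⊆ I with A nonempty. Then log(∑_{i ∈ A'} p i · w i + n · (1 − ∑_{i ∈ A'} w i)) ≤ log(∑_{i ∈ A} p i · w i + n · (1 − ∑_{i ∈ A} w i)). That is, the Theorem 2 upper bound on term (a) is monotonically nonincreasing in the simplification level (Assumption 1 holds for this bound). -/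
/-!
Since the weights sum to one, the bound is `log` of `∑ i, q i * w i`, where `q` is the likelihood
`p` on the kept particles and its upper bound `n` on the discarded ones. Keeping more particles
only lowers `q` pointwise, and `q`, `w` are positive, so the argument of `log` is positive and
antitone in the kept set.
-/

open Finset

section

variable {ι : Type*} [Fintype ι] [DecidableEq ι]

theorem sum_ite_mem_mul_eq (A : Finset ι) (w p : ι → ℝ) (n : ℝ) :
    ∑ i, (if i ∈ A then p i else n) * w i =
      ∑ i ∈ A, p i * w i + n * (∑ i, w i - ∑ i ∈ A, w i) := by
  rw [← sum_sdiff (subset_univ A), ← sum_sdiff (subset_univ A) (f := w), add_sub_cancel_right,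
    mul_sum, add_comm]
  congr 1
  · exact sum_congr rfl fun i hi => by rw [if_pos hi]
  · exact sum_congr rfl fun i hi => by rw [if_neg (mem_sdiff.1 hi).2]

theorem sum_ite_mem_mul_antitone {A A' : Finset ι} (hAA' : A ⊆ A') {w p : ι → ℝ} {n : ℝ}
    (hw : ∀ i, 0 ≤ w i) (hpn : ∀ i, p i ≤ n) :
    ∑ i, (if i ∈ A' then p i else n) * w i ≤ ∑ i, (if i ∈ A then p i else n) * w i := by
  refine sum_le_sum fun i _ => mul_le_mul_of_nonneg_right ?_ (hw i)
  by_cases hA : i ∈ A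
  · simp [hA, hAA' hA]
  · rw [if_neg hA]
    split_ifs
    exacts [hpn i, le_rfl]

theorem sum_ite_mem_mul_pos [Nonempty ι] (A : Finset ι) {w p : ι → ℝ} {n : ℝ}
    (hw : ∀ i, 0 < w i) (hp : ∀ i, 0 < p i) (hn : 0 < n) :
    0 < ∑ i, (if i ∈ A then p i else n) * w i :=
  sum_pos (fun i _ => mul_pos (by split_ifs; exacts [hp i, hn]) (hw i)) univ_nonempty

end

theorem stmt_9_general {I : Type*} [Fintype I]
    (w p : I → ℝ) (n : ℝ)
    (hw : ∀ i, 0 < w i) (hwsum : ∑ i, w i = 1)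
    (hp : ∀ i, 0 < p i) (hpn : ∀ i, p i ≤ n)
    (A A' : Finset I) (hAA' : A ⊆ A') :
    Real.log ((∑ i ∈ A', p i * w i) + n * (1 - ∑ i ∈ A', w i)) ≤
      Real.log ((∑ i ∈ A, p i * w i) + n * (1 - ∑ i ∈ A, w i)) := by
  classical
  have : Nonempty I := by
    by_contra hI
    simp [not_nonempty_iff.1 hI] at hwsum
  have hn : 0 < n := (hp (Classical.arbitrary I)).trans_le (hpn _)
  rw [← hwsum, ← sum_ite_mem_mul_eq, ← sum_ite_mem_mul_eq]
  exact Real.log_le_log (sum_ite_mem_mul_pos A' hw hp hn)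
    (sum_ite_mem_mul_antitone hAA' (fun i => (hw i).le) hpn)

/-- The Theorem 2 upper bound on term (a) is monotonically nonincreasing in
the simplification level (Assumption 1 holds for this bound). -/
theorem stmt_9 {I : Type*} [Fintype I]
    (w p : I → ℝ) (n : ℝ)
    (hw : ∀ i, 0 < w i) (hwsum : ∑ i, w i = 1)
    (hp : ∀ i, 0 < p i) (hpn : ∀ i, p i ≤ n)
    (A A' : Finset I) (hAA' : A ⊆ A') (hA : A.Nonempty) :
    Real.log ((∑ i ∈ A', p i * w i) + n * (1 - ∑ i ∈ A', w i)) ≤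
      Real.log ((∑ i ∈ A, p i * w i) + n * (1 - ∑ i ∈ A, w i)) :=
  stmt_9_general w p n hw hwsum hp hpn A A' hAA'
end
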